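/- Let ρ be a convex modular on Y satisfying the Δ₂-condition with constant τ, and suppose φ: X × X → Y_ρ satisfies φ(x,0) = φ(0,z) = 0 and ρ(φ(x+y,z+w) + φ(x−y,z−w) − 2φ(x,z) − 2φ(x,w)) ≤ α(x,y)α(z,w). Then for every positive integer n and all x,z ∈ X: ρ(φ(x,z) − 4ⁿφ(x, z/2ⁿ)) ≤ (1/τ²) ∑_{j=1}^{n} (τ³/2)ʲ α(z/2ʲ, z/2ʲ) · α(x,0). -/
import Mathlib


theorem stmt18 {X Y : Type*} [AddCommGroup X] [Module ℝ X] [AddCommGroup Y] [Module ℝ Y]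
    (ρ : Y → ℝ) (α : X → X → ℝ) (φ : X → X → Y) (τ : ℝ)
    (hzero : ∀ u : Y, ρ u = 0 ↔ u = 0)
    (hnonneg : ∀ u : Y, 0 ≤ ρ u)
    (hsym : ∀ (a : ℝ) (u : Y), |a| = 1 → ρ (a • u) = ρ u)
    (hconv : ∀ (a b : ℝ) (u v : Y), 0 ≤ a → 0 ≤ b → a + b = 1 →
      ρ (a • u + b • v) ≤ a * ρ u + b * ρ v)
    (hτ : 2 ≤ τ)
    (hΔ₂ : ∀ u : Y, ρ (2 • u) ≤ τ * ρ u)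
    (hα : ∀ x y, 0 ≤ α x y)
    (hzeroL : ∀ z : X, φ 0 z = 0) (hzeroR : ∀ x : X, φ x 0 = 0)
    (hineq : ∀ x y z w : X,
      ρ (φ (x + y) (z + w) + φ (x - y) (z - w) - 2 • φ x z - 2 • φ x w) ≤
        α x y * α z w) :
    ∀ (n : ℕ), 1 ≤ n → ∀ x z : X,
      ρ (φ x z - (4 ^ n : ℝ) • φ x ((1 / 2 ^ n : ℝ) • z)) ≤
        (1 / τ ^ 2) * (∑ j ∈ Finset.range n,
          (τ ^ 3 / 2) ^ (j + 1) * α ((1 / 2 ^ (j + 1) : ℝ) • z) ((1 / 2 ^ (j + 1) : ℝ) • z))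
          * α x 0 := by
  have hτ0 : (0:ℝ) < τ := by linarith
  have hτne : τ ≠ 0 := ne_of_gt hτ0
  have hadd : ∀ u v : Y, ρ (u + v) ≤ τ / 2 * (ρ u + ρ v) := by
    intro u v
    have h := hconv (1/2) (1/2) (2 • u) (2 • v) (by norm_num) (by norm_num) (by norm_num)
    have e : (1/2 : ℝ) • (2 • u) + (1/2 : ℝ) • (2 • v) = u + v := by module
    rw [e] at h
    have h2u := hΔ₂ u
    have h2v := hΔ₂ v
    nlinarith [hnonneg u, hnonneg v]
  have hquad : ∀ w : Y, ρ ((4:ℝ) • w) ≤ τ ^ 2 * ρ w := by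
    intro w
    have e : (4:ℝ) • w = 2 • (2 • w) := by module
    rw [e]
    have h1 := hΔ₂ (2 • w)
    have h2 := hΔ₂ w
    nlinarith [hnonneg w, hnonneg (2 • w)]
  have key : ∀ x z : X, ρ (φ x z - (4:ℝ) • φ x ((1/2 : ℝ) • z)) ≤
      α ((1/2:ℝ) • z) ((1/2:ℝ) • z) * α x 0 := by
    intro x z
    have h := hineq x 0 ((1/2:ℝ) • z) ((1/2:ℝ) • z)
    have hc : (1/2:ℝ) • z + (1/2:ℝ) • z = z := by module
    rw [add_zero, sub_zero, hc, sub_self, hzeroR] at h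
    have e : φ x z + 0 - 2 • φ x ((1/2:ℝ) • z) - 2 • φ x ((1/2:ℝ) • z)
        = φ x z - (4:ℝ) • φ x ((1/2:ℝ) • z) := by module
    rw [e] at h
    linarith [h, mul_comm (α x 0) (α ((1/2:ℝ) • z) ((1/2:ℝ) • z)),
      (mul_comm (α x 0) (α ((1/2:ℝ) • z) ((1/2:ℝ) • z))).le]
  intro n hn
  induction n with
  | zero => omega
  | succ n ih =>
    intro x z
    rcases Nat.eq_zero_or_pos n with h0 | hpos
    · subst h0
      simp only [Finset.range_one, Finset.sum_singleton, zero_add, pow_one]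
      have hk := key x z
      have hα2 : 0 ≤ α ((1/2:ℝ) • z) ((1/2:ℝ) • z) * α x 0 :=
        mul_nonneg (hα _ _) (hα _ _)
      have hfac : (1:ℝ) ≤ 1 / τ ^ 2 * (τ ^ 3 / 2) := by
        rw [div_mul_eq_mul_div, one_mul, div_div, le_div_iff₀ (by positivity : (0:ℝ) < 2 * τ ^ 2)]
        nlinarith [mul_nonneg (mul_pos hτ0 hτ0).le (by linarith : (0:ℝ) ≤ τ - 2)]
      calc ρ (φ x z - (4:ℝ) • φ x ((1/2:ℝ) • z))
          ≤ α ((1/2:ℝ) • z) ((1/2:ℝ) • z) * α x 0 := hk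
        _ ≤ (1 / τ ^ 2 * (τ ^ 3 / 2)) * (α ((1/2:ℝ) • z) ((1/2:ℝ) • z) * α x 0) := by
            nlinarith
        _ = 1 / τ ^ 2 * (τ ^ 3 / 2 * α ((1/2:ℝ) • z) ((1/2:ℝ) • z)) * α x 0 := by ring
    · have ihz := ih hpos x ((1/2:ℝ) • z)
      have hsum : ∀ j : ℕ, ((1 / 2 ^ (j+1) : ℝ)) • ((1/2:ℝ) • z) = ((1 / 2 ^ (j+1+1) : ℝ)) • z := by
        intro j
        rw [smul_smul]
        congr 1
        rw [pow_succ]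
        ring
      simp only [hsum] at ihz
      have hdecomp : φ x z - (4 ^ (n+1) : ℝ) • φ x ((1 / 2 ^ (n+1) : ℝ) • z)
          = (φ x z - (4:ℝ) • φ x ((1/2:ℝ) • z))
            + (4:ℝ) • (φ x ((1/2:ℝ) • z) - (4 ^ n : ℝ) • φ x ((1 / 2 ^ (n+1) : ℝ) • z)) := by
        match_scalars <;> ring
      have hw : ((1 / 2 ^ n : ℝ)) • ((1/2:ℝ) • z) = ((1 / 2 ^ (n+1) : ℝ)) • z := by
        rw [smul_smul]; congr 1; rw [pow_succ]; ring
      rw [hw] at ihz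
      rw [hdecomp]
      set A := α ((1/2:ℝ) • z) ((1/2:ℝ) • z) with hA
      set S := ∑ j ∈ Finset.range n,
        (τ ^ 3 / 2) ^ (j + 1) * α ((1 / 2 ^ (j+1+1) : ℝ) • z) ((1 / 2 ^ (j+1+1) : ℝ) • z) with hS
      have h1 := hadd (φ x z - (4:ℝ) • φ x ((1/2:ℝ) • z))
        ((4:ℝ) • (φ x ((1/2:ℝ) • z) - (4 ^ n : ℝ) • φ x ((1 / 2 ^ (n+1) : ℝ) • z)))
      have h2 := key x z
      have h3 := hquad (φ x ((1/2:ℝ) • z) - (4 ^ n : ℝ) • φ x ((1 / 2 ^ (n+1) : ℝ) • z))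
      -- ihz : ρ w ≤ (1/τ^2) * S * α x 0
      have hρw := hnonneg (φ x ((1/2:ℝ) • z) - (4 ^ n : ℝ) • φ x ((1 / 2 ^ (n+1) : ℝ) • z))
      have hτ2 : (0:ℝ) < τ ^ 2 := by positivity
      -- RHS sum manipulation
      rw [Finset.sum_range_succ']
      have hSeq : (∑ j ∈ Finset.range n,
          (τ ^ 3 / 2) ^ (j + 1 + 1) * α ((1 / 2 ^ (j + 1 + 1) : ℝ) • z) ((1 / 2 ^ (j + 1 + 1) : ℝ) • z))
          = (τ ^ 3 / 2) * S := by
        rw [hS, Finset.mul_sum]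
        refine Finset.sum_congr rfl fun j _ => ?_
        rw [pow_succ]
        ring
      rw [hSeq]
      have hf0 : ((1 / 2 ^ (0 + 1) : ℝ)) • z = (1/2:ℝ) • z := by norm_num
      rw [hf0]
      have hfin : 1 / τ ^ 2 * (τ ^ 3 / 2 * S + (τ ^ 3 / 2) ^ (0 + 1) * A) * α x 0
          = τ / 2 * (A * α x 0 + τ ^ 2 * (1 / τ ^ 2 * S * α x 0)) := by
        field_simp
        ring
      rw [hfin]
      have step : ρ (φ x z - (4:ℝ) • φ x ((1/2:ℝ) • z)
            + (4:ℝ) • (φ x ((1/2:ℝ) • z) - (4 ^ n : ℝ) • φ x ((1 / 2 ^ (n+1) : ℝ) • z)))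
          ≤ τ / 2 * (A * α x 0 + τ ^ 2 * (1 / τ ^ 2 * S * α x 0)) := by
        have hb : ρ ((4:ℝ) • (φ x ((1/2:ℝ) • z) - (4 ^ n : ℝ) • φ x ((1 / 2 ^ (n+1) : ℝ) • z)))
            ≤ τ ^ 2 * (1 / τ ^ 2 * S * α x 0) := by
          calc ρ ((4:ℝ) • _) ≤ τ ^ 2 * ρ _ := h3
            _ ≤ τ ^ 2 * (1 / τ ^ 2 * S * α x 0) := by
                exact mul_le_mul_of_nonneg_left ihz (le_of_lt hτ2)
        calc ρ _ ≤ τ / 2 * (ρ (φ x z - (4:ℝ) • φ x ((1/2:ℝ) • z))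
              + ρ ((4:ℝ) • (φ x ((1/2:ℝ) • z) - (4 ^ n : ℝ) • φ x ((1 / 2 ^ (n+1) : ℝ) • z)))) := h1
          _ ≤ τ / 2 * (A * α x 0 + τ ^ 2 * (1 / τ ^ 2 * S * α x 0)) := by
              have hτ2' : (0:ℝ) ≤ τ / 2 := by linarith
              exact mul_le_mul_of_nonneg_left (add_le_add h2 hb) hτ2'
      exact step
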